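/- arXiv:1204.1283 — 2 statements merged into one kernel-verified Lean document; each statement's English description precedes it below -/
import Mathlib

section
/- (Example 2, distant triples, small ᾱ) Let f ≥ 1 and let k be a nonnegative integer with 3(2k+1) ≤ 2f. Let Ā_k = {x ∈ ℤ/fℤ : x = j mod f for some integer j with |j| ≤ k} and A_k = (ℤ/fℤ) \ Ā_k. Then 4·|{(x,y,z) ∈ (ℤ/fℤ)³ : x−y ∈ A_k, y−z ∈ A_k, x−z ∈ A_k}| = 4f³ − 12(2k+1)f² + (9(2k+1)² − 1)·f. -/
/-- `Ā_k ⊆ ℤ/fℤ`: the elements at circular distance at most `k` from `0`. -/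
def closeSet (f k : ℕ) : Set (ZMod f) :=
  {x : ZMod f | ∃ j : ℤ, j.natAbs ≤ k ∧ (j : ZMod f) = x}

open Finset

lemma sum_abs_Icc (k : ℕ) :
    ∑ j ∈ Finset.Icc (-(k:ℤ)) k, |j| = k * (k+1) := by
  induction k with
  | zero => simp
  | succ n ih =>
    have h : Finset.Icc (-((n:ℕ)+1:ℤ)) ((n:ℕ)+1:ℤ) =
        insert (-((n:ℤ)+1)) (insert ((n:ℤ)+1) (Finset.Icc (-(n:ℤ)) n)) := by
      ext j; simp [Finset.mem_Icc, Finset.mem_insert]; omega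
    push_cast at h ⊢
    rw [h, Finset.sum_insert (by simp [Finset.mem_Icc] <;> omega),
        Finset.sum_insert (by simp [Finset.mem_Icc] <;> omega), ih]
    rw [abs_of_nonpos (by omega), abs_of_nonneg (by omega)]
    ring

lemma card_filter_abs (K a : ℤ) (ha : |a| ≤ K) :
    ((((Finset.Icc (-K) K).filter fun b => |a+b| ≤ K)).card : ℤ) = 2*K + 1 - |a| := by
  have h : (Finset.Icc (-K) K).filter (fun b => |a+b| ≤ K)
      = Finset.Icc (max (-K) (-K-a)) (min K (K-a)) := by
    ext b; simp [Finset.mem_filter, Finset.mem_Icc, abs_le]; omega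
  rw [h, Int.card_Icc]
  rcases abs_cases a with ⟨h1,h2⟩ | ⟨h1,h2⟩ <;>
    · rw [Int.toNat_of_nonneg (by omega)]; omega

lemma S_int (k : ℕ) :
    ∑ a ∈ Finset.Icc (-(k:ℤ)) k, ∑ b ∈ Finset.Icc (-(k:ℤ)) k,
      (if |a + b| ≤ (k:ℤ) then (1:ℤ) else 0)
    = (2*(k:ℤ)+1)^2 - k*(k+1) := by
  have hcard : ((Finset.Icc (-(k:ℤ)) k).card : ℤ) = 2*(k:ℤ)+1 := by
    rw [Int.card_Icc]; rw [Int.toNat_of_nonneg (by omega)] <;> omega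
  have h1 : ∀ a ∈ Finset.Icc (-(k:ℤ)) k,
      ∑ b ∈ Finset.Icc (-(k:ℤ)) k, (if |a + b| ≤ (k:ℤ) then (1:ℤ) else 0)
      = 2*(k:ℤ)+1-|a| := by
    intro a ha
    rw [Finset.sum_boole]
    exact card_filter_abs _ _ (abs_le.mpr (Finset.mem_Icc.mp ha))
  rw [Finset.sum_congr rfl h1, Finset.sum_sub_distrib, sum_abs_Icc, Finset.sum_const,
    nsmul_eq_mul, hcard]
  ring

/-- Example 2, distant triples, small `ᾱ`: if `3(2k+1) ≤ 2f` then four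
times the number of triples in `ℤ/fℤ` with all pairwise differences in `A_k = (ℤ/fℤ) ∖ Ā_k`
is `4f³ - 12(2k+1)f² + (9(2k+1)² - 1)f`. -/
theorem card_distant_triples_small
    (f k : ℕ) (hf : 1 ≤ f) (h : 3 * (2 * k + 1) ≤ 2 * f) :
    4 * (Nat.card {p : ZMod f × ZMod f × ZMod f //
        p.1 - p.2.1 ∉ closeSet f k ∧ p.2.1 - p.2.2 ∉ closeSet f k ∧
          p.1 - p.2.2 ∉ closeSet f k} : ℤ)
      = 4 * (f : ℤ) ^ 3 - 12 * (2 * (k : ℤ) + 1) * (f : ℤ) ^ 2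
          + (9 * (2 * (k : ℤ) + 1) ^ 2 - 1) * (f : ℤ) := by
  classical
  haveI : NeZero f := ⟨by omega⟩
  have h3k : 3 * k < f := by omega
  set K : ℤ := (k : ℤ) with hK
  set Abar : Finset (ZMod f) := (Finset.Icc (-K) K).image (fun j : ℤ => (j : ZMod f)) with hAbar
  have hinj : ∀ x ∈ Finset.Icc (-K) K, ∀ y ∈ Finset.Icc (-K) K,
      ((x : ZMod f) = (y : ZMod f)) → x = y := by
    intro a ha b hb hab
    rw [Finset.mem_Icc] at ha hb
    have hd : (f:ℤ) ∣ b - a := ((ZMod.intCast_eq_intCast_iff _ _ _).mp hab).dvd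
    have h0 : b - a = 0 := Int.eq_zero_of_abs_lt_dvd hd (abs_lt.mpr ⟨by omega, by omega⟩)
    omega
  have hcard : (Abar.card : ℤ) = 2*K+1 := by
    rw [hAbar, Finset.card_image_of_injOn
      (fun x hx y hy => hinj x (Finset.mem_coe.mp hx) y (Finset.mem_coe.mp hy)),
      Int.card_Icc]
    omega
  have hmem : ∀ j : ℤ, -(2*K) ≤ j → j ≤ 2*K → (((j : ZMod f) ∈ Abar) ↔ |j| ≤ K) := by
    intro j hj1 hj2
    constructor
    · intro hm
      rw [hAbar, Finset.mem_image] at hm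
      obtain ⟨j', hj', he⟩ := hm
      rw [Finset.mem_Icc] at hj'
      have hd : (f:ℤ) ∣ j - j' := ((ZMod.intCast_eq_intCast_iff _ _ _).mp he).dvd
      have h0 : j - j' = 0 := Int.eq_zero_of_abs_lt_dvd hd (abs_lt.mpr ⟨by omega, by omega⟩)
      rw [abs_le]; omega
    · intro hj3
      rw [hAbar, Finset.mem_image]
      exact ⟨j, Finset.mem_Icc.mpr (abs_le.mp hj3), rfl⟩
  have hclose : ∀ x : ZMod f, (x ∈ closeSet f k) ↔ x ∈ Abar := by
    intro x
    constructor
    · rintro ⟨j, hj, rfl⟩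
      rw [hAbar, Finset.mem_image]
      exact ⟨j, Finset.mem_Icc.mpr ⟨by omega, by omega⟩, rfl⟩
    · intro hx
      rw [hAbar, Finset.mem_image] at hx
      obtain ⟨j, hj, rfl⟩ := hx
      rw [Finset.mem_Icc] at hj
      exact ⟨j, by omega, rfl⟩
  set χ : ZMod f → ℤ := fun x => if x ∈ Abar then 1 else 0 with hχ
  have hsum1 : ∑ x : ZMod f, χ x = 2*K+1 := by
    rw [hχ]
    rw [Finset.sum_boole, Finset.filter_univ_mem, hcard]
  have hshift : ∀ a : ZMod f, ∑ b : ZMod f, χ (a+b) = 2*K+1 := fun a => by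
    rw [← hsum1]
    exact Fintype.sum_equiv (Equiv.addLeft a) _ _ (fun b => rfl)
  have hshiftr : ∀ b : ZMod f, ∑ a : ZMod f, χ (a+b) = 2*K+1 := fun b => by
    rw [← hsum1]
    exact Fintype.sum_equiv (Equiv.addRight b) _ _ (fun a => rfl)
  have e1 : ∀ (t : ZMod f → ℤ), ∑ x : ZMod f, χ x * t x = ∑ x ∈ Abar, t x := by
    intro t
    simp only [hχ, boole_mul]
    rw [Finset.sum_ite_mem, Finset.univ_inter]
  set w : ZMod f → ℤ := fun a => ∑ b : ZMod f, χ b * χ (a+b) with hw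
  have hW : ∑ a : ZMod f, w a = (2*K+1)^2 := by
    rw [hw]
    rw [Finset.sum_comm]
    have : ∀ b : ZMod f, ∑ a : ZMod f, χ b * χ (a+b) = χ b * (2*K+1) := by
      intro b
      rw [← Finset.mul_sum, hshiftr b]
    rw [Finset.sum_congr rfl (fun b _ => this b), ← Finset.sum_mul, hsum1]
    ring
  have hS : ∑ a : ZMod f, χ a * w a = (2*K+1)^2 - K*(K+1) := by
    calc ∑ a : ZMod f, χ a * w a
        = ∑ a ∈ Abar, w a := e1 _
      _ = ∑ a ∈ Abar, ∑ b ∈ Abar, χ (a+b) := Finset.sum_congr rfl fun a _ => e1 _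
      _ = ∑ i ∈ Finset.Icc (-K) K, ∑ j ∈ Finset.Icc (-K) K,
            χ ((i : ZMod f) + (j : ZMod f)) := by
          rw [hAbar, Finset.sum_image hinj]
          exact Finset.sum_congr rfl fun i _ => Finset.sum_image hinj
      _ = ∑ i ∈ Finset.Icc (-K) K, ∑ j ∈ Finset.Icc (-K) K,
            (if |i + j| ≤ K then (1:ℤ) else 0) := by
          refine Finset.sum_congr rfl fun i hi => Finset.sum_congr rfl fun j hj => ?_
          rw [Finset.mem_Icc] at hi hj
          rw [← Int.cast_add, hχ]
          exact if_congr (hmem (i+j) (by omega) (by omega)) rfl rfl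
      _ = (2*K+1)^2 - K*(K+1) := S_int k
  rw [Nat.card_eq_fintype_card, Fintype.card_subtype]
  rw [← Finset.sum_boole]
  simp only [Fintype.sum_prod_type]
  have hpoint : ∀ x y z : ZMod f,
      (if (x - y ∉ closeSet f k ∧ y - z ∉ closeSet f k ∧ x - z ∉ closeSet f k)
        then (1:ℤ) else 0)
      = (1 - χ (x-y)) * ((1 - χ (y-z)) * (1 - χ (x-z))) := by
    intro x y z
    simp only [hclose, hχ]
    by_cases h1 : x - y ∈ Abar <;> by_cases h2 : y - z ∈ Abar <;>
      by_cases h3 : x - z ∈ Abar <;> simp [h1, h2, h3]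
  rw [Finset.sum_congr rfl (fun x _ => Finset.sum_congr rfl (fun y _ =>
    Finset.sum_congr rfl (fun z _ => hpoint x y z)))]
  have hvar : ∀ x : ZMod f,
      (∑ y : ZMod f, ∑ z : ZMod f, (1 - χ (x-y)) * ((1 - χ (y-z)) * (1 - χ (x-z))))
      = ∑ a : ZMod f, ∑ b : ZMod f, (1 - χ a) * ((1 - χ b) * (1 - χ (a+b))) := by
    intro x
    calc ∑ y : ZMod f, ∑ z : ZMod f, (1 - χ (x-y)) * ((1 - χ (y-z)) * (1 - χ (x-z)))
        = ∑ y : ZMod f, ∑ z : ZMod f,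
            (1 - χ (x-y)) * ((1 - χ (y-z)) * (1 - χ ((x-y)+(y-z)))) := by
          refine Finset.sum_congr rfl fun y _ => Finset.sum_congr rfl fun z _ => ?_
          rw [sub_add_sub_cancel]
      _ = ∑ y : ZMod f, ∑ b : ZMod f,
            (1 - χ (x-y)) * ((1 - χ b) * (1 - χ ((x-y)+b))) :=
          Finset.sum_congr rfl fun y _ => (Equiv.subLeft y).sum_comp
            (fun b => (1 - χ (x-y)) * ((1 - χ b) * (1 - χ ((x-y)+b))))
      _ = ∑ a : ZMod f, ∑ b : ZMod f, (1 - χ a) * ((1 - χ b) * (1 - χ (a+b))) :=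
          (Equiv.subLeft x).sum_comp
            (fun a => ∑ b : ZMod f, (1 - χ a) * ((1 - χ b) * (1 - χ (a+b))))
  have hw' : ∀ a : ZMod f, ∑ b : ZMod f, χ b * χ (a+b) = w a := fun a => rfl
  have hinner : ∀ a : ZMod f, ∑ b : ZMod f, (1 - χ a) * ((1 - χ b) * (1 - χ (a+b)))
      = (f:ℤ) - (f:ℤ) * χ a - (2*K+1) - (2*K+1) + χ a * (2*K+1) + χ a * (2*K+1)
          + w a - χ a * w a := by
    intro a
    have expand : ∀ b : ZMod f, (1 - χ a) * ((1 - χ b) * (1 - χ (a+b)))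
        = 1 - χ a - χ b - χ (a+b) + χ a * χ b + χ a * χ (a+b) + χ b * χ (a+b)
            - χ a * (χ b * χ (a+b)) := fun b => by ring
    rw [Finset.sum_congr rfl fun b _ => expand b]
    simp only [Finset.sum_sub_distrib, Finset.sum_add_distrib, ← Finset.mul_sum,
      Finset.sum_const, Finset.card_univ, ZMod.card, nsmul_eq_mul, hsum1,
      hshift a, hw' a]
    ring
  have hTsum : ∑ a : ZMod f, ((f:ℤ) - (f:ℤ) * χ a - (2*K+1) - (2*K+1)
        + χ a * (2*K+1) + χ a * (2*K+1) + w a - χ a * w a)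
      = (f:ℤ)^2 - 3*(2*K+1)*(f:ℤ) + 2*(2*K+1)^2 + K*(K+1) := by
    simp only [Finset.sum_sub_distrib, Finset.sum_add_distrib, ← Finset.mul_sum,
      ← Finset.sum_mul, Finset.sum_const, Finset.card_univ, ZMod.card,
      nsmul_eq_mul, hsum1, hW, hS]
    ring
  rw [Finset.sum_congr rfl (fun x _ => hvar x), Finset.sum_const, Finset.card_univ,
    ZMod.card, nsmul_eq_mul, Finset.sum_congr rfl (fun a _ => hinner a), hTsum]
  ring
end

section
/- (Example 3, Hamming-distant triples) Let n ≥ 1 and F = (ℤ/2ℤ)^n, and let wt(x) denote the Hamming weight of x ∈ F. Then |{(x,y,z) ∈ F³ : wt(x+y) ≥ 2, wt(y+z) ≥ 2, wt(x+z) ≥ 2}| = 8^n − (3n+3)·4^n + (3n² + 3n + 2)·2^n. -/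
/-!
Writing `a = x - y`, `b = y - z` (in characteristic 2, `x + y = x - y`) turns the count into
`|F|` times the number of pairs `(a, b)` with `a`, `b`, `a + b` all outside the unit ball `A`.
Inclusion–exclusion over these three conditions gives `|F|² - 3|F||A| + 3|A|² - T`, where `T`
counts the pairs with `a`, `b`, `a + b` all in `A`. Here `|A| = n + 1`, and `T = 3n + 1`: the
pairs `(0, b)` with `b ∈ A`, and `(eᵢ, 0)`, `(eᵢ, eᵢ)`, since `eᵢ + eⱼ` has weight 2 for `i ≠ j`.
-/

/-- The Hamming weight of `x ∈ (ℤ/2ℤ)ⁿ`: the number of nonzero coordinates. -/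
def hammingWt {n : ℕ} (x : Fin n → ZMod 2) : ℕ :=
  (Finset.univ.filter fun i => x i ≠ 0).card

open Finset Fintype

section InclusionExclusion

variable {G : Type*} [AddCommGroup G] [Fintype G] [DecidableEq G] (S : Finset G)

theorem card_triples_sub_notMem :
    #{p : G × G × G | p.1 - p.2.1 ∉ S ∧ p.2.1 - p.2.2 ∉ S ∧ p.1 - p.2.2 ∉ S} =
      card G * #{q : G × G | q.1 ∉ S ∧ q.2 ∉ S ∧ q.1 + q.2 ∉ S} := by
  rw [← card_univ, ← card_product]
  refine card_nbij' (fun p => (p.1, p.1 - p.2.1, p.2.1 - p.2.2))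
    (fun p => (p.1, p.1 - p.2.1, p.1 - p.2.1 - p.2.2)) ?_ ?_ ?_ ?_
  · intro p hp
    simpa using hp
  · rintro ⟨x, a, b⟩ hp
    simp only [mem_coe, mem_filter, mem_product, mem_univ, true_and, sub_sub_cancel] at hp ⊢
    rwa [sub_sub, sub_sub_cancel]
  · intro p _
    simp
  · intro p _
    simp

theorem card_filter_add_mem (a : G) : #({b | a + b ∈ S} : Finset G) = #S :=
  card_equiv (Equiv.addLeft a) (by simp)

theorem sum_card_filter_add_mem : ∑ a, #{b ∈ S | a + b ∈ S} = #S ^ 2 := by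
  simp_rw [card_filter]
  rw [sum_comm]
  simp_rw [← card_filter, add_comm _ (_ : G), card_filter_add_mem]
  simp [sq]

theorem card_filter_notMem_add_notMem (a : G) :
    (#{b | b ∉ S ∧ a + b ∉ S} : ℤ) = card G - 2 * #S + #{b ∈ S | a + b ∈ S} := by
  have hcompl :
      ({b | b ∉ S ∧ a + b ∉ S} : Finset G) = (S ∪ ({b | a + b ∈ S} : Finset G))ᶜ := by
    ext; simp
  have hinter : S ∩ ({b | a + b ∈ S} : Finset G) = {b ∈ S | a + b ∈ S} := by
    ext; simp
  have hunion := card_union_add_card_inter S ({b | a + b ∈ S} : Finset G)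
  rw [hinter, card_filter_add_mem] at hunion
  rw [hcompl, card_compl, Nat.cast_sub (card_le_univ _)]
  omega

theorem card_pairs_notMem :
    (#{q : G × G | q.1 ∉ S ∧ q.2 ∉ S ∧ q.1 + q.2 ∉ S} : ℤ) =
      card G ^ 2 - 3 * card G * #S + 3 * #S ^ 2 - ∑ a ∈ S, #{b ∈ S | a + b ∈ S} := by
  have hfib : #{q : G × G | q.1 ∉ S ∧ q.2 ∉ S ∧ q.1 + q.2 ∉ S} =
      ∑ a ∈ Sᶜ, #{b | b ∉ S ∧ a + b ∉ S} := by
    simp_rw [card_filter, Fintype.sum_prod_type, ite_and, sum_ite_irrel, sum_const_zero,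
      ← sum_filter]
    congr 1
    ext
    simp
  have hsplit :
      (∑ a ∈ Sᶜ, #{b ∈ S | a + b ∈ S} : ℤ) + ∑ a ∈ S, #{b ∈ S | a + b ∈ S} = #S ^ 2 := by
    exact_mod_cast (sum_compl_add_sum S _).trans (sum_card_filter_add_mem S)
  rw [hfib, Nat.cast_sum, sum_congr rfl fun a _ => card_filter_notMem_add_notMem S a,
    sum_add_distrib, sum_const, card_compl, nsmul_eq_mul, Nat.cast_sub (card_le_univ S)]
  push_cast at hsplit ⊢
  linear_combination hsplit

end InclusionExclusion

section UnitBall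

variable {n : ℕ}

theorem single_one_injective : Function.Injective fun i : Fin n => Pi.single i (1 : ZMod 2) :=
  fun i j h => by simpa [Pi.single_apply] using congr_fun h i

theorem hammingWt_single (i : Fin n) : hammingWt (Pi.single i (1 : ZMod 2)) = 1 := by
  simp [hammingWt, Pi.single_apply, filter_eq']

theorem hammingWt_single_add_single {i j : Fin n} (hij : i ≠ j) :
    hammingWt (Pi.single i (1 : ZMod 2) + Pi.single j 1) = 2 := by
  have hsupp : ({l | (Pi.single i 1 + Pi.single j 1 : Fin n → ZMod 2) l ≠ 0} : Finset (Fin n)) =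
      {i, j} := by
    ext l
    by_cases hi : l = i <;> by_cases hj : l = j <;> simp_all [Pi.single_apply]
  rw [hammingWt, hsupp, card_pair hij]

theorem hammingWt_le_one_iff {x : Fin n → ZMod 2} :
    hammingWt x ≤ 1 ↔ x = 0 ∨ ∃ i, x = Pi.single i 1 := by
  constructor
  · intro hx
    rw [or_iff_not_imp_left]
    intro hx0
    obtain ⟨i, hi⟩ := Function.ne_iff.mp hx0
    refine ⟨i, funext fun j => ?_⟩
    by_cases hji : j = i
    · have hone : ∀ c : ZMod 2, c ≠ 0 → c = 1 := by decide
      simpa [hji] using hone _ hi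
    · have hj : x j = 0 := by
        by_contra hj
        exact hji (card_le_one.mp hx j (by simpa using hj) i (by simpa using hi))
      simp [hj, hji]
  · rintro (rfl | ⟨i, rfl⟩)
    · simp [hammingWt]
    · exact (hammingWt_single i).le

def unitBall (n : ℕ) : Finset (Fin n → ZMod 2) := {x | hammingWt x ≤ 1}

theorem mem_unitBall {x : Fin n → ZMod 2} : x ∈ unitBall n ↔ hammingWt x ≤ 1 := by
  simp [unitBall]

theorem zero_mem_unitBall : (0 : Fin n → ZMod 2) ∈ unitBall n :=
  mem_unitBall.mpr (hammingWt_le_one_iff.mpr (.inl rfl))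

theorem single_mem_unitBall (i : Fin n) : Pi.single i 1 ∈ unitBall n :=
  mem_unitBall.mpr (hammingWt_le_one_iff.mpr (.inr ⟨i, rfl⟩))

theorem unitBall_eq_insert_image :
    unitBall n = insert 0 (univ.image fun i => Pi.single i 1) := by
  ext x
  simp [mem_unitBall, hammingWt_le_one_iff, eq_comm]

theorem card_unitBall : #(unitBall n) = n + 1 := by
  rw [unitBall_eq_insert_image, card_insert_of_notMem (by simp),
    card_image_of_injective _ single_one_injective, card_univ, Fintype.card_fin]

theorem single_add_single_mem_unitBall_iff {i j : Fin n} :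
    Pi.single i (1 : ZMod 2) + Pi.single j 1 ∈ unitBall n ↔ i = j := by
  refine ⟨fun h => ?_, ?_⟩
  · by_contra hij
    have := mem_unitBall.mp h
    rw [hammingWt_single_add_single hij] at this
    omega
  · rintro rfl
    simp [ZModModule.add_self, mem_unitBall, hammingWt]

theorem filter_single_add_mem_unitBall (i : Fin n) :
    {b ∈ unitBall n | Pi.single i 1 + b ∈ unitBall n} = {0, Pi.single i 1} := by
  ext b
  simp only [mem_filter, mem_insert, mem_singleton]
  constructor
  · rintro ⟨hb, hib⟩
    rcases hammingWt_le_one_iff.mp (mem_unitBall.mp hb) with rfl | ⟨j, rfl⟩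
    · exact .inl rfl
    · exact .inr (by rw [single_add_single_mem_unitBall_iff.mp hib])
  · rintro (rfl | rfl)
    · rw [add_zero]
      exact ⟨zero_mem_unitBall, single_mem_unitBall i⟩
    · exact ⟨single_mem_unitBall i, single_add_single_mem_unitBall_iff.mpr rfl⟩

theorem sum_card_filter_add_mem_unitBall :
    ∑ a ∈ unitBall n, #{b ∈ unitBall n | a + b ∈ unitBall n} = 3 * n + 1 := by
  nth_rewrite 1 [unitBall_eq_insert_image]
  rw [sum_insert (by simp), sum_image fun i _ j _ h => single_one_injective h]
  simp_rw [zero_add, filter_true_of_mem fun _ h => h, filter_single_add_mem_unitBall]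
  have hpair (i : Fin n) : #({0, Pi.single i 1} : Finset (Fin n → ZMod 2)) = 2 :=
    card_pair fun h => by simpa using congr_fun h i
  simp only [hpair, card_unitBall, sum_const, card_univ, Fintype.card_fin, smul_eq_mul]
  ring

end UnitBall

theorem card_hamming_distant_triples_general (n : ℕ) :
    (Nat.card {p : (Fin n → ZMod 2) × (Fin n → ZMod 2) × (Fin n → ZMod 2) //
        2 ≤ hammingWt (p.1 + p.2.1) ∧ 2 ≤ hammingWt (p.2.1 + p.2.2) ∧
          2 ≤ hammingWt (p.1 + p.2.2)} : ℤ)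
      = 8 ^ n - (3 * (n : ℤ) + 3) * 4 ^ n + (3 * (n : ℤ) ^ 2 + 3 * (n : ℤ) + 2) * 2 ^ n := by
  have hdistant (x y : Fin n → ZMod 2) : 2 ≤ hammingWt (x + y) ↔ x - y ∉ unitBall n := by
    rw [ZModModule.sub_eq_add, mem_unitBall]
    omega
  rw [Nat.card_eq_fintype_card, Fintype.card_subtype]
  simp only [hdistant]
  rw [card_triples_sub_notMem, Nat.cast_mul, card_pairs_notMem, card_unitBall,
    sum_card_filter_add_mem_unitBall, card_fun, ZMod.card, Fintype.card_fin]
  have h4 : (4 : ℤ) ^ n = (2 ^ n) ^ 2 := by rw [← pow_mul, mul_comm, pow_mul]; norm_num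
  have h8 : (8 : ℤ) ^ n = (2 ^ n) ^ 3 := by rw [← pow_mul, mul_comm, pow_mul]; norm_num
  push_cast
  rw [h4, h8]
  ring

/-- Example 3, Hamming-distant triples: the number of triples in
`F = (ℤ/2ℤ)ⁿ` whose pairwise sums all have Hamming weight at least 2 is
`8ⁿ - (3n+3)·4ⁿ + (3n²+3n+2)·2ⁿ`. -/
theorem card_hamming_distant_triples (n : ℕ) (hn : 1 ≤ n) :
    (Nat.card {p : (Fin n → ZMod 2) × (Fin n → ZMod 2) × (Fin n → ZMod 2) //
        2 ≤ hammingWt (p.1 + p.2.1) ∧ 2 ≤ hammingWt (p.2.1 + p.2.2) ∧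
          2 ≤ hammingWt (p.1 + p.2.2)} : ℤ)
      = 8 ^ n - (3 * (n : ℤ) + 3) * 4 ^ n + (3 * (n : ℤ) ^ 2 + 3 * (n : ℤ) + 2) * 2 ^ n :=
  card_hamming_distant_triples_general n
end
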